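/- Let n ≥ 2 and let σ be an irreducible complex representation of the symmetric group S_n. Then dim_ℂ Hom_{S_n}(σ ⊗ refl, σ) = dim_ℂ End_{S_{n-1}}(Res_{S_{n-1}} σ) − 1, where refl is the standard (n−1)-dimensional representation of S_n and S_{n-1} ⊂ S_n is the stabilizer of the letter n. -/

import Mathlib

open TensorProduct

noncomputable section

/-- The standard (reflection) representation of `S_n`: the subspace
`{x ∈ ℂⁿ : x₁ + ⋯ + x_n = 0}` of the permutation representation `ℂⁿ`. -/
def reflSpace (n : ℕ) : Submodule ℂ (Fin n → ℂ) :=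
  LinearMap.ker (∑ i : Fin n, LinearMap.proj i)

/-- The linear action of a permutation `g` on `ℂⁿ`, `(g • x) i = x (g⁻¹ i)`. -/
def permL (n : ℕ) (g : Equiv.Perm (Fin n)) : (Fin n → ℂ) →ₗ[ℂ] (Fin n → ℂ) :=
  LinearMap.funLeft ℂ ℂ ⇑g⁻¹

/-- The action of a permutation `g` on the reflection representation. -/
def reflMap (n : ℕ) (g : Equiv.Perm (Fin n)) : reflSpace n →ₗ[ℂ] reflSpace n :=
  (permL n g).restrict (p := reflSpace n) (q := reflSpace n) (fun x hx => by
    simp only [reflSpace, LinearMap.mem_ker, LinearMap.sum_apply, LinearMap.proj_apply] at hx ⊢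
    simpa [permL, LinearMap.funLeft] using (Equiv.sum_comp g⁻¹ x).trans hx)

/-- The letter `n` in `Fin n`. -/
def lastIdx (n : ℕ) (hn : 0 < n) : Fin n := ⟨n - 1, by omega⟩

/-- The subgroup `S_{n-1} ⊆ S_n`, the stabilizer of the letter `n`. -/
def stabLast (n : ℕ) (hn : 0 < n) : Subgroup (Equiv.Perm (Fin n)) :=
  MulAction.stabilizer (Equiv.Perm (Fin n)) (lastIdx n hn)


/-- The space `Hom_{S_n}(σ ⊗ refl, σ)` of `S_n`-equivariant linear maps `X ⊗ refl → X`. -/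
def homTensorRefl (n : ℕ) {X : Type*} [AddCommGroup X] [Module ℂ X]
    (σ : Representation ℂ (Equiv.Perm (Fin n)) X) :
    Submodule ℂ ((X ⊗[ℂ] reflSpace n) →ₗ[ℂ] X) where
  carrier := {f | ∀ g : Equiv.Perm (Fin n),
    (σ g) ∘ₗ f = f ∘ₗ TensorProduct.map (σ g) (reflMap n g)}
  add_mem' := fun ha hb g => by
    simp only [LinearMap.comp_add, LinearMap.add_comp, ha g, hb g]
  zero_mem' := fun g => by simp
  smul_mem' := fun c a ha g => by
    simp only [LinearMap.comp_smul, LinearMap.smul_comp, ha g]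

/-- The space `End_{S_{n-1}}(Res_{S_{n-1}} σ)` of `S_{n-1}`-equivariant endomorphisms. -/
def endRes (n : ℕ) (hn : 0 < n) {X : Type*} [AddCommGroup X] [Module ℂ X]
    (σ : Representation ℂ (Equiv.Perm (Fin n)) X) :
    Submodule ℂ (X →ₗ[ℂ] X) where
  carrier := {f | ∀ h ∈ stabLast n hn, (σ h) ∘ₗ f = f ∘ₗ (σ h)}
  add_mem' := fun ha hb h hh => by
    simp only [LinearMap.comp_add, LinearMap.add_comp, ha h hh, hb h hh]
  zero_mem' := fun h hh => by simp
  smul_mem' := fun c a ha h hh => by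
    simp only [LinearMap.comp_smul, LinearMap.smul_comp, ha h hh]

section Aux

variable {n : ℕ} {X : Type*} [AddCommGroup X] [Module ℂ X]

/-- The commutant `End_{S_n}(σ)`. -/
def endG (σ : Representation ℂ (Equiv.Perm (Fin n)) X) : Submodule ℂ (X →ₗ[ℂ] X) where
  carrier := {f | ∀ g : Equiv.Perm (Fin n), (σ g) ∘ₗ f = f ∘ₗ (σ g)}
  add_mem' := fun ha hb g => by
    simp only [LinearMap.comp_add, LinearMap.add_comp, ha g, hb g]
  zero_mem' := fun g => by simp
  smul_mem' := fun c a ha g => by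
    simp only [LinearMap.comp_smul, LinearMap.smul_comp, ha g]

/-- Equivariant families of endomorphisms: `Hom_{S_n}(σ ⊗ ℂⁿ, σ)` in coordinates. -/
def famSub (σ : Representation ℂ (Equiv.Perm (Fin n)) X) :
    Submodule ℂ (Fin n → (X →ₗ[ℂ] X)) where
  carrier := {Φ | ∀ (g : Equiv.Perm (Fin n)) (i : Fin n), (σ g) ∘ₗ Φ i = Φ (g i) ∘ₗ (σ g)}
  add_mem' := fun ha hb g i => by
    simp only [Pi.add_apply, LinearMap.comp_add, LinearMap.add_comp, ha g i, hb g i]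
  zero_mem' := fun g i => by simp
  smul_mem' := fun c a ha g i => by
    simp only [Pi.smul_apply, LinearMap.comp_smul, LinearMap.smul_comp, ha g i]

lemma reflMap_coe (g : Equiv.Perm (Fin n)) (w : reflSpace n) (j : Fin n) :
    ((reflMap n g w : reflSpace n) : Fin n → ℂ) j = (w : Fin n → ℂ) (g⁻¹ j) := rfl

/-- `v i = e_i - (1/n)·(1,…,1) ∈ refl`. -/
def vi (i : Fin n) : reflSpace n :=
  ⟨Pi.single i 1 - (n : ℂ)⁻¹ • (1 : Fin n → ℂ), by
    have hn : (n : ℂ) ≠ 0 := Nat.cast_ne_zero.mpr i.pos.ne'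
    simp only [reflSpace, LinearMap.mem_ker, LinearMap.sum_apply, LinearMap.proj_apply,
      Pi.sub_apply, Pi.smul_apply, smul_eq_mul, mul_one]
    rw [Finset.sum_sub_distrib]
    simp [Pi.single_apply, Finset.sum_ite_eq, mul_comm, hn]⟩

lemma vi_coe (i j : Fin n) :
    ((vi i : reflSpace n) : Fin n → ℂ) j = (if j = i then 1 else 0) - (n : ℂ)⁻¹ := by
  simp [vi, Pi.single_apply]

lemma reflMap_vi (g : Equiv.Perm (Fin n)) (i : Fin n) :
    reflMap n g (vi i) = vi (g i) := by
  apply Subtype.ext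
  funext j
  rw [reflMap_coe, vi_coe, vi_coe]
  congr 1
  by_cases h : j = g i
  · simp [h]
  · have h2 : g⁻¹ j ≠ i := fun hi => h (by rw [← hi]; simp)
    simp [h, h2]
    exact h2

lemma sum_coord_eq_zero (w : reflSpace n) : ∑ i, (w : Fin n → ℂ) i = 0 := by
  have h := w.2
  simp only [reflSpace, LinearMap.mem_ker, LinearMap.sum_apply, LinearMap.proj_apply] at h
  exact h

lemma sum_vi (hn : 0 < n) : (∑ i, vi i : reflSpace n) = 0 := by
  have hnc : (n : ℂ) ≠ 0 := Nat.cast_ne_zero.mpr hn.ne'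
  apply Subtype.ext
  rw [Submodule.coe_sum]
  funext j
  rw [Finset.sum_apply]
  simp only [vi_coe]
  rw [Finset.sum_sub_distrib]
  simp [Finset.sum_ite_eq, mul_comm, hnc]

lemma sum_smul_vi (w : reflSpace n) :
    (∑ i, (w : Fin n → ℂ) i • vi i : reflSpace n) = w := by
  apply Subtype.ext
  rw [Submodule.coe_sum]
  funext j
  rw [Finset.sum_apply]
  simp only [Submodule.coe_smul, Pi.smul_apply, vi_coe, smul_eq_mul, mul_sub]
  rw [Finset.sum_sub_distrib]
  have h0 : ∑ i, (w : Fin n → ℂ) i * (n : ℂ)⁻¹ = 0 := by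
    rw [← Finset.sum_mul, sum_coord_eq_zero, zero_mul]
  rw [h0, sub_zero]
  simp [mul_ite, Finset.sum_ite_eq]

end Aux


section Aux2

variable {n : ℕ} {X : Type*} [AddCommGroup X] [Module ℂ X]

/-- Frobenius reciprocity: equivariant families `≃` `End_{S_{n-1}}(Res σ)`. -/
def iso1 (hn : 0 < n) (σ : Representation ℂ (Equiv.Perm (Fin n)) X) :
    (famSub σ) ≃ₗ[ℂ] (endRes n hn σ) where
  toFun := fun Φ => ⟨Φ.1 (lastIdx n hn), fun h hh => by
    have h1 := Φ.2 h (lastIdx n hn)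
    have h2 : h (lastIdx n hn) = lastIdx n hn := MulAction.mem_stabilizer_iff.mp hh
    rwa [h2] at h1⟩
  map_add' := fun Φ Ψ => rfl
  map_smul' := fun c Φ => rfl
  invFun := fun T => ⟨fun i =>
      σ (Equiv.swap (lastIdx n hn) i) ∘ₗ (T.1 ∘ₗ σ (Equiv.swap (lastIdx n hn) i)), by
    intro g i
    set l := lastIdx n hn
    have inv2 : ∀ (j : Fin n) (y : X),
        σ (Equiv.swap l j) (σ (Equiv.swap l j) y) = y := fun j y => by
      rw [← Module.End.mul_apply, ← map_mul, Equiv.swap_mul_self, map_one, Module.End.one_apply]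
    have hmem : Equiv.swap l (g i) * g * Equiv.swap l i ∈ stabLast n hn := by
      simp only [stabLast, MulAction.mem_stabilizer_iff, Equiv.Perm.smul_def,
        Equiv.Perm.mul_apply]
      rw [Equiv.swap_apply_left, Equiv.swap_apply_right]
    have key := T.2 _ hmem
    ext x
    simp only [LinearMap.comp_apply]
    have h2 := DFunLike.congr_fun key (σ (Equiv.swap l i) x)
    simp only [LinearMap.comp_apply, map_mul, Module.End.mul_apply] at h2
    rw [inv2 i x] at h2
    conv_lhs => rw [← inv2 (g i) (σ g (σ (Equiv.swap l i) (T.1 (σ (Equiv.swap l i) x))))]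
    rw [h2]⟩
  left_inv := fun Φ => by
    apply Subtype.ext
    funext i
    set l := lastIdx n hn
    have inv2 : ∀ (j : Fin n) (y : X),
        σ (Equiv.swap l j) (σ (Equiv.swap l j) y) = y := fun j y => by
      rw [← Module.End.mul_apply, ← map_mul, Equiv.swap_mul_self, map_one, Module.End.one_apply]
    have h1 := Φ.2 (Equiv.swap l i) l
    rw [Equiv.swap_apply_left] at h1
    ext x
    simp only [LinearMap.comp_apply]
    have := DFunLike.congr_fun h1 (σ (Equiv.swap l i) x)
    simp only [LinearMap.comp_apply] at this
    rw [this, inv2 i x]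
  right_inv := fun T => by
    apply Subtype.ext
    simp only [Equiv.swap_self]
    have h1 : ((Equiv.refl (Fin n)) : Equiv.Perm (Fin n)) = 1 := rfl
    rw [h1, map_one, Module.End.one_eq_id, LinearMap.comp_id, LinearMap.id_comp]

/-- The bilinear map attached to a family of endomorphisms. -/
def bil (Φ : Fin n → X →ₗ[ℂ] X) (σ : Representation ℂ (Equiv.Perm (Fin n)) X) :
    X →ₗ[ℂ] reflSpace n →ₗ[ℂ] X :=
  LinearMap.mk₂ ℂ (fun x w => ∑ i, (w : Fin n → ℂ) i • Φ i x)
    (fun x y w => by simp [smul_add, Finset.sum_add_distrib])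
    (fun c x w => by
      simp only [map_smul, Finset.smul_sum]
      exact Finset.sum_congr rfl fun i _ => smul_comm _ _ _)
    (fun x w u => by simp [add_smul, Finset.sum_add_distrib])
    (fun c w x => by simp [Finset.smul_sum, smul_smul])

lemma lift_mem (σ : Representation ℂ (Equiv.Perm (Fin n)) X) {Φ : Fin n → X →ₗ[ℂ] X}
    (hΦ : Φ ∈ famSub σ) : TensorProduct.lift (bil Φ σ) ∈ homTensorRefl n σ := by
  intro g
  apply TensorProduct.ext'
  intro x w
  have hpt : ∀ i, σ g (Φ i x) = Φ (g i) (σ g x) := fun i => by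
    have := DFunLike.congr_fun (hΦ g i) x
    simpa using this
  simp only [LinearMap.comp_apply, TensorProduct.map_tmul, TensorProduct.lift.tmul, bil,
    LinearMap.mk₂_apply, map_sum, map_smul]
  refine Fintype.sum_equiv g _ _ fun j => ?_
  rw [reflMap_coe, Equiv.Perm.inv_def, Equiv.symm_apply_apply, hpt j]

lemma sum_mem_endG (σ : Representation ℂ (Equiv.Perm (Fin n)) X) {Φ : Fin n → X →ₗ[ℂ] X}
    (hΦ : Φ ∈ famSub σ) : (∑ i, Φ i) ∈ endG σ := by
  intro g
  ext x
  have hpt : ∀ i, σ g (Φ i x) = Φ (g i) (σ g x) := fun i => by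
    have := DFunLike.congr_fun (hΦ g i) x
    simpa using this
  simp only [LinearMap.comp_apply, LinearMap.sum_apply, map_sum]
  exact Fintype.sum_equiv g _ _ fun j => hpt j

lemma bw_mem (σ : Representation ℂ (Equiv.Perm (Fin n)) X) {a : (X ⊗[ℂ] reflSpace n) →ₗ[ℂ] X}
    {T : X →ₗ[ℂ] X} (ha : a ∈ homTensorRefl n σ) (hT : T ∈ endG σ) :
    (fun i => a ∘ₗ ((TensorProduct.mk ℂ X (reflSpace n)).flip (vi i)) + (n : ℂ)⁻¹ • T)
      ∈ famSub σ := by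
  intro g i
  ext x
  simp only [LinearMap.comp_apply, LinearMap.add_apply, LinearMap.smul_apply,
    LinearMap.flip_apply, TensorProduct.mk_apply, map_add, map_smul]
  have h1 : σ g (a (x ⊗ₜ[ℂ] vi i)) = a ((σ g x) ⊗ₜ[ℂ] vi (g i)) := by
    have := DFunLike.congr_fun (ha g) (x ⊗ₜ[ℂ] vi i)
    simp only [LinearMap.comp_apply, TensorProduct.map_tmul] at this
    rw [this, reflMap_vi]
  have h2 : σ g (T x) = T (σ g x) := by
    have := DFunLike.congr_fun (hT g) x
    simpa using this
  rw [h1, h2]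

/-- Splitting `ℂⁿ = refl ⊕ triv`: families `≃` `Hom(σ⊗refl,σ) × End_G(σ)`. -/
def iso2 (hn : 0 < n) (σ : Representation ℂ (Equiv.Perm (Fin n)) X) :
    (famSub σ) ≃ₗ[ℂ] (homTensorRefl n σ × endG σ) where
  toFun := fun Φ => (⟨TensorProduct.lift (bil Φ.1 σ), lift_mem σ Φ.2⟩,
    ⟨∑ i, Φ.1 i, sum_mem_endG σ Φ.2⟩)
  map_add' := fun Φ Ψ => by
    refine Prod.ext (Subtype.ext ?_) (Subtype.ext ?_)
    · apply TensorProduct.ext'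
      intro x w
      simp [bil, smul_add, Finset.sum_add_distrib]
    · simp [Finset.sum_add_distrib]
  map_smul' := fun c Φ => by
    refine Prod.ext (Subtype.ext ?_) (Subtype.ext ?_)
    · apply TensorProduct.ext'
      intro x w
      simp only [RingHom.id_apply, Prod.smul_fst, Submodule.coe_smul, Pi.smul_apply,
        LinearMap.smul_apply, TensorProduct.lift.tmul, bil, LinearMap.mk₂_apply,
        Finset.smul_sum]
      exact Finset.sum_congr rfl fun i _ => smul_comm _ _ _
    · simp [Finset.smul_sum]
  invFun := fun p =>
    ⟨fun i => p.1.1 ∘ₗ ((TensorProduct.mk ℂ X (reflSpace n)).flip (vi i)) + (n : ℂ)⁻¹ • p.2.1,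
      bw_mem σ p.1.2 p.2.2⟩
  left_inv := fun Φ => by
    apply Subtype.ext
    funext i
    ext x
    simp only [LinearMap.add_apply, LinearMap.comp_apply, LinearMap.flip_apply,
      TensorProduct.mk_apply, TensorProduct.lift.tmul, bil, LinearMap.mk₂_apply,
      LinearMap.smul_apply, LinearMap.sum_apply]
    have hsplit : ∀ j, ((vi i : reflSpace n) : Fin n → ℂ) j • Φ.1 j x
        = (if j = i then (1:ℂ) else 0) • Φ.1 j x - (n : ℂ)⁻¹ • Φ.1 j x := by
      intro j; rw [vi_coe, sub_smul]
    rw [Finset.sum_congr rfl (fun j _ => hsplit j), Finset.sum_sub_distrib]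
    simp only [ite_smul, one_smul, zero_smul, Finset.sum_ite_eq', Finset.mem_univ, if_true]
    rw [← Finset.smul_sum, sub_add_cancel]
  right_inv := fun p => by
    have hnc : (n : ℂ) ≠ 0 := Nat.cast_ne_zero.mpr hn.ne'
    refine Prod.ext (Subtype.ext ?_) (Subtype.ext ?_)
    · apply TensorProduct.ext'
      intro x w
      simp only [TensorProduct.lift.tmul, bil, LinearMap.mk₂_apply, LinearMap.add_apply,
        LinearMap.comp_apply, LinearMap.flip_apply, TensorProduct.mk_apply,
        LinearMap.smul_apply, smul_add]
      rw [Finset.sum_add_distrib]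
      have h2 : ∑ i, (w : Fin n → ℂ) i • (n : ℂ)⁻¹ • p.2.1 x = 0 := by
        rw [← Finset.sum_smul, sum_coord_eq_zero, zero_smul]
      rw [h2, add_zero]
      have h1 : ∀ i, (w : Fin n → ℂ) i • p.1.1 (x ⊗ₜ[ℂ] vi i)
          = p.1.1 (x ⊗ₜ[ℂ] ((w : Fin n → ℂ) i • vi i)) := by
        intro i; rw [TensorProduct.tmul_smul, map_smul]
      rw [Finset.sum_congr rfl (fun i _ => h1 i), ← map_sum, ← TensorProduct.tmul_sum,
        sum_smul_vi]
    · ext x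
      simp only [LinearMap.sum_apply, LinearMap.add_apply, LinearMap.comp_apply,
        LinearMap.flip_apply, TensorProduct.mk_apply, LinearMap.smul_apply]
      rw [Finset.sum_add_distrib, ← map_sum, ← TensorProduct.tmul_sum, sum_vi hn,
        TensorProduct.tmul_zero, map_zero, zero_add, Finset.sum_const, Finset.card_univ,
        Fintype.card_fin]
      rw [← Nat.cast_smul_eq_nsmul ℂ, smul_smul, mul_inv_cancel₀ hnc, one_smul]

lemma endG_eq_span [FiniteDimensional ℂ X] [Nontrivial X]
    (σ : Representation ℂ (Equiv.Perm (Fin n)) X)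
    (hirr : ∀ U : Submodule ℂ X,
      (∀ g : Equiv.Perm (Fin n), ∀ x ∈ U, σ g x ∈ U) → U = ⊥ ∨ U = ⊤) :
    endG σ = (ℂ ∙ (LinearMap.id : X →ₗ[ℂ] X)) := by
  apply le_antisymm
  · intro T hT
    obtain ⟨μ, hμ⟩ := Module.End.exists_eigenvalue (T : Module.End ℂ X)
    have hU : ∀ g : Equiv.Perm (Fin n), ∀ x ∈ Module.End.eigenspace T μ,
        σ g x ∈ Module.End.eigenspace T μ := by
      intro g x hx
      rw [Module.End.mem_eigenspace_iff] at hx ⊢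
      have h := DFunLike.congr_fun (hT g) x
      simp only [LinearMap.comp_apply] at h
      rw [← h, hx, map_smul]
    rcases hirr _ hU with h | h
    · exact absurd h hμ
    · have hx : ∀ x : X, T x = μ • x := fun x =>
        Module.End.mem_eigenspace_iff.mp (h ▸ Submodule.mem_top)
      rw [Submodule.mem_span_singleton]
      exact ⟨μ, by ext x; simp [hx x]⟩
  · rw [Submodule.span_singleton_le_iff_mem]
    intro g
    ext x
    simp

lemma finrank_endG_eq_one [FiniteDimensional ℂ X] [Nontrivial X]
    (σ : Representation ℂ (Equiv.Perm (Fin n)) X)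
    (hirr : ∀ U : Submodule ℂ X,
      (∀ g : Equiv.Perm (Fin n), ∀ x ∈ U, σ g x ∈ U) → U = ⊥ ∨ U = ⊤) :
    Module.finrank ℂ (endG σ) = 1 := by
  rw [endG_eq_span σ hirr]
  apply finrank_span_singleton
  intro h
  obtain ⟨x, hx⟩ := exists_ne (0 : X)
  exact hx (by simpa using DFunLike.congr_fun h x)

end Aux2


/-- For an irreducible complex representation `σ` of `S_n` (`n ≥ 2`),
`dim Hom_{S_n}(σ ⊗ refl, σ) = dim End_{S_{n-1}}(Res_{S_{n-1}} σ) - 1`. -/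
theorem dim_hom_tensor_refl (n : ℕ) (hn : 2 ≤ n)
    {X : Type*} [AddCommGroup X] [Module ℂ X] [FiniteDimensional ℂ X] [Nontrivial X]
    (σ : Representation ℂ (Equiv.Perm (Fin n)) X)
    (hirr : ∀ U : Submodule ℂ X,
      (∀ g : Equiv.Perm (Fin n), ∀ x ∈ U, σ g x ∈ U) → U = ⊥ ∨ U = ⊤) :
    Module.finrank ℂ (homTensorRefl n σ) + 1
      = Module.finrank ℂ (endRes n (by omega) σ) := by
  have hn0 : 0 < n := by omega
  haveI h5 : FiniteDimensional ℂ (reflSpace n) := inferInstance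
  haveI h6 : FiniteDimensional ℂ (X ⊗[ℂ] reflSpace n) := Module.Finite.tensorProduct ℂ X (reflSpace n)
  haveI h6a : Module.Free ℂ X := Module.Free.of_divisionRing ℂ X
  haveI h6b : Module.Free ℂ (X ⊗[ℂ] reflSpace n) := Module.Free.tensor (R := ℂ) (S := ℂ) (M := X) (N := reflSpace n)
  haveI h7 : FiniteDimensional ℂ ((X ⊗[ℂ] reflSpace n) →ₗ[ℂ] X) :=
    Module.Finite.linearMap ℂ ℂ (X ⊗[ℂ] reflSpace n) X
  haveI h8 : FiniteDimensional ℂ (homTensorRefl n σ) := inferInstance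
  haveI h9 : FiniteDimensional ℂ (X →ₗ[ℂ] X) := inferInstance
  haveI h10 : FiniteDimensional ℂ (endG σ) := inferInstance
  have e2 : Module.finrank ℂ (famSub σ) = Module.finrank ℂ (endRes n hn0 σ) :=
    (iso1 hn0 σ).finrank_eq
  have e1 : Module.finrank ℂ (famSub σ) = Module.finrank ℂ (homTensorRefl n σ × endG σ) :=
    (iso2 hn0 σ).finrank_eq
  have e3 : Module.finrank ℂ (endG σ) = 1 := finrank_endG_eq_one σ hirr
  have e4 : Module.finrank ℂ (homTensorRefl n σ × endG σ)
      = Module.finrank ℂ (homTensorRefl n σ) + Module.finrank ℂ (endG σ) :=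
    Module.finrank_prod
  rw [e4, e3] at e1
  rw [e1] at e2
  exact e2

end
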